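/- arXiv:1405.0952 — 3 statements merged into one kernel-verified Lean document; each statement's English description precedes it below -/
import Mathlib

section
/- Let M be the (n−1)×(n−1) matrix whose (i,j) entry is the 2-form dz_i ∧ dz̄_j (entries of dS ∧ dS*). Then the (n−1)-th matrix power M^{n−1}, computed in the algebra of matrices over the exterior algebra, equals (n−2)! · (−1)^{n−2} · (dz_1 ∧ dz̄_1 ∧ ⋯ ∧ dz_{n−1} ∧ dz̄_{n−1}) · Id, for every n ≥ 2. -/
/-!
Write `x i = ι (dz i)`, `y j = ι (dz̄ j)` and `ω l = x l * y l`. The matrix `M = x yᵀ` has rank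
one, so `(M ^ (k + 1)) i j = x i * s ^ k * y j` with `s = ∑ y l * x l = -∑ ω l`. The 2-forms `ω l`
commute and square to zero, so a sum of `t` of them has `t`-th power `t! • ∏ ω l` and vanishing
higher powers. Since `x i * ω i = 0 = ω j * y j` and the `ω l` are even, the summands `ω i` and
`ω j` drop out of `x i * s ^ k * y j`: for `i ≠ j` what is left is a `k`-th power of a sum of
`k - 1` terms, hence `0`, and for `i = j` it is `k! • x i * (∏_{l ≠ i} ω l) * y i = k! • ∏ ω l`.
-/

open Finset

section SquareZero

variable {A : Type*} [Semiring A]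

theorem Commute.add_pow_succ_of_mul_self_eq_zero {a b : A} (h : Commute a b) (ha : a * a = 0)
    (k : ℕ) : (a + b) ^ (k + 1) = b ^ (k + 1) + (k + 1) • (a * b ^ k) := by
  induction k with
  | zero => simp [add_comm]
  | succ k ih =>
    rw [pow_succ', ih]
    simp only [add_mul, mul_add, mul_smul_comm, ← mul_assoc, ha, zero_add, ← h.eq,
      ← pow_succ']
    rw [mul_assoc, ← pow_succ', succ_nsmul _ (k + 1)]
    abel

theorem mul_add_pow_of_mul_eq_zero {a b c : A} (hac : a * c = 0) (hab : Commute a b) (k : ℕ) :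
    a * (c + b) ^ k = a * b ^ k := by
  induction k with
  | zero => simp
  | succ k ih =>
    rw [pow_succ, ← mul_assoc, ih, mul_add, mul_assoc a (b ^ k) b, ← pow_succ,
      (hab.pow_right k).eq, mul_assoc (b ^ k) a c, hac, mul_zero, zero_add]

theorem add_pow_mul_of_mul_eq_zero {a b c : A} (hca : c * a = 0) (hab : Commute a b) (k : ℕ) :
    (c + b) ^ k * a = b ^ k * a := by
  induction k with
  | zero => simp
  | succ k ih =>
    rw [pow_succ', mul_assoc, ih, add_mul, ← mul_assoc b, ← pow_succ', ← (hab.pow_right k).eq,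
      ← mul_assoc c a, hca, zero_mul, zero_add]

variable {ι : Type*} [DecidableEq ι] (ω : ι → A) (hcomm : ∀ i j, Commute (ω i) (ω j))
  (hsq : ∀ i, ω i * ω i = 0)
include hcomm hsq

theorem sum_pow_eq_zero_of_card_lt (s : Finset ι) {k : ℕ} (hk : #s < k) :
    (∑ l ∈ s, ω l) ^ k = 0 := by
  induction s using Finset.induction_on generalizing k with
  | empty => simpa using zero_pow (Nat.pos_iff_ne_zero.mp hk)
  | insert a s ha ih =>
    rw [card_insert_of_notMem ha] at hk
    obtain ⟨k, rfl⟩ := Nat.exists_eq_succ_of_ne_zero (by omega : k ≠ 0)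
    rw [sum_insert ha,
      (Commute.sum_right _ _ _ fun l _ => hcomm a l).add_pow_succ_of_mul_self_eq_zero (hsq a),
      ih (by omega), ih (by omega), mul_zero, smul_zero, add_zero]

theorem sum_pow_card_eq_factorial_smul_noncommProd (s : Finset ι) :
    (∑ l ∈ s, ω l) ^ #s =
      (#s).factorial • s.noncommProd ω (Pairwise.set_pairwise (fun i j _ => hcomm i j) _) := by
  induction s using Finset.induction_on with
  | empty => simp
  | insert a s ha ih =>
    rw [sum_insert ha, card_insert_of_notMem ha,
      (Commute.sum_right _ _ _ fun l _ => hcomm a l).add_pow_succ_of_mul_self_eq_zero (hsq a), ih,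
      sum_pow_eq_zero_of_card_lt ω hcomm hsq s (Nat.lt_succ_self _), zero_add,
      mul_smul_comm, smul_smul, ← Nat.factorial_succ]
    congr 1
    exact (noncommProd_insert_of_notMem _ _ _ _ ha).symm

end SquareZero

theorem Matrix.pow_succ_apply_of_apply_eq_mul {m A : Type*} [Fintype m] [DecidableEq m]
    [Semiring A] {M : Matrix m m A} {x y : m → A} (hM : ∀ i j, M i j = x i * y j) (k : ℕ)
    (i j : m) : (M ^ (k + 1)) i j = x i * (∑ l, y l * x l) ^ k * y j := by
  induction k generalizing j with
  | zero => simp [hM]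
  | succ k ih =>
    calc (M ^ (k + 1 + 1)) i j = ∑ l, x i * (∑ l, y l * x l) ^ k * y l * (x l * y j) := by
          simp only [pow_succ _ (k + 1), Matrix.mul_apply, ih, hM]
      _ = x i * (∑ l, y l * x l) ^ k * (∑ l, y l * x l) * y j := by
          simp only [mul_sum, sum_mul, mul_assoc]
      _ = x i * (∑ l, y l * x l) ^ (k + 1) * y j := by rw [mul_assoc (x i), ← pow_succ]

theorem Finset.noncommProd_univ_eq_prod_ofFn {β : Type*} [Monoid β] {m : ℕ} (f : Fin m → β)
    (comm : Set.Pairwise (univ : Finset (Fin m)) (Function.onFun Commute f)) :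
    univ.noncommProd f comm = (List.ofFn f).prod := by
  simp only [noncommProd, Fin.univ_val_map, Multiset.noncommProd_coe]

namespace ExteriorAlgebra

variable {R V : Type*} [CommRing R] [AddCommGroup V] [Module R V]

theorem ι_mul_ι_anticomm (u v : V) : ι R u * ι R v = -(ι R v * ι R u) :=
  eq_neg_of_add_eq_zero_left (ι_add_mul_swap u v)

theorem commute_ι_mul_ι_ι (u v w : V) : Commute (ι R u * ι R v) (ι R w) := by
  simp only [Commute, SemiconjBy, mul_assoc, ι_mul_ι_anticomm v w]
  rw [mul_neg, ← mul_assoc, ι_mul_ι_anticomm u w, neg_mul, neg_neg, mul_assoc]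

theorem commute_ι_mul_ι (u v u' v' : V) : Commute (ι R u * ι R v) (ι R u' * ι R v') :=
  ((commute_ι_mul_ι_ι u v u').mul_right (commute_ι_mul_ι_ι u v v'))

theorem ι_mul_ι_mul_self (u v : V) : ι R u * ι R v * (ι R u * ι R v) = 0 := by
  rw [← mul_assoc, (commute_ι_mul_ι_ι u v u).eq, ← mul_assoc, ι_sq_zero, zero_mul, zero_mul]

variable {κ : Type*} (u v : κ → V)

theorem commute_ι_sum_ι_mul_ι (w : V) (s : Finset κ) :
    Commute (ι R w) (∑ l ∈ s, ι R (u l) * ι R (v l)) :=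
  Commute.sum_right _ _ _ fun _ _ => (commute_ι_mul_ι_ι _ _ _).symm

variable [Fintype κ] [DecidableEq κ]

theorem ι_mul_sum_pow_mul_ι_self {k : ℕ} (hk : Fintype.card κ = k + 1) (i : κ) :
    ι R (u i) * (∑ l, ι R (u l) * ι R (v l)) ^ k * ι R (v i) =
      k.factorial • univ.noncommProd (fun l => ι R (u l) * ι R (v l))
        (Pairwise.set_pairwise (fun _ _ _ => commute_ι_mul_ι _ _ _ _) _) := by
  have hcard : #(univ.erase i) = k := by
    rw [card_erase_of_mem (mem_univ i), card_univ, hk, Nat.add_sub_cancel]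
  have hdrop : ι R (u i) * (∑ l, ι R (u l) * ι R (v l)) ^ k =
      ι R (u i) * (∑ l ∈ univ.erase i, ι R (u l) * ι R (v l)) ^ #(univ.erase i) := by
    rw [← add_sum_erase _ _ (mem_univ i), hcard,
      mul_add_pow_of_mul_eq_zero (by rw [← mul_assoc, ι_sq_zero, zero_mul])
        (commute_ι_sum_ι_mul_ι u v _ _)]
  rw [hdrop, sum_pow_card_eq_factorial_smul_noncommProd _ (fun _ _ => commute_ι_mul_ι _ _ _ _)
      (fun _ => ι_mul_ι_mul_self _ _), hcard, mul_smul_comm, smul_mul_assoc,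
    (noncommProd_commute _ _ _ _ fun l _ => (commute_ι_mul_ι_ι _ _ _).symm).eq, mul_assoc]
  exact congrArg _ (noncommProd_erase_mul _ (mem_univ i) _ _)

theorem ι_mul_sum_pow_mul_ι_of_ne {k : ℕ} (hk : Fintype.card κ = k + 1) {i j : κ}
    (hij : i ≠ j) :
    ι R (u i) * (∑ l, ι R (u l) * ι R (v l)) ^ k * ι R (v j) = 0 := by
  have hj : j ∈ univ.erase i := mem_erase.mpr ⟨hij.symm, mem_univ j⟩
  have hcard : #((univ.erase i).erase j) < k := by
    rw [card_erase_of_mem hj, card_erase_of_mem (mem_univ i), card_univ, hk]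
    have : 1 < Fintype.card κ := Fintype.one_lt_card_iff.mpr ⟨i, j, hij⟩
    omega
  set r := ∑ l ∈ (univ.erase i).erase j, ι R (u l) * ι R (v l)
  have hdrop_i : ι R (u i) * (∑ l, ι R (u l) * ι R (v l)) ^ k =
      ι R (u i) * (ι R (u j) * ι R (v j) + r) ^ k := by
    rw [← add_sum_erase _ _ (mem_univ i), ← add_sum_erase _ _ hj,
      mul_add_pow_of_mul_eq_zero (by rw [← mul_assoc, ι_sq_zero, zero_mul])
        ((commute_ι_mul_ι_ι _ _ _).symm.add_right (commute_ι_sum_ι_mul_ι u v _ _))]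
  have hdrop_j : (ι R (u j) * ι R (v j) + r) ^ k * ι R (v j) = r ^ k * ι R (v j) :=
    add_pow_mul_of_mul_eq_zero (by rw [mul_assoc, ι_sq_zero, mul_zero])
      (commute_ι_sum_ι_mul_ι u v _ _) k
  rw [hdrop_i, mul_assoc, hdrop_j, sum_pow_eq_zero_of_card_lt _
    (fun _ _ => commute_ι_mul_ι _ _ _ _) (fun _ => ι_mul_ι_mul_self _ _) _ hcard, zero_mul,
    mul_zero]

theorem pow_eq_diagonal_of_apply_eq_ι_mul_ι {M : Matrix κ κ (ExteriorAlgebra R V)}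
    (hM : ∀ i j, M i j = ι R (u i) * ι R (v j)) {k : ℕ} (hk : Fintype.card κ = k + 1) :
    M ^ (k + 1) = Matrix.diagonal fun _ => ((k.factorial : R) * (-1) ^ k) •
      univ.noncommProd (fun l => ι R (u l) * ι R (v l))
        (Pairwise.set_pairwise (fun _ _ _ => commute_ι_mul_ι _ _ _ _) _) := by
  have hsum : ∑ l, ι R (v l) * ι R (u l) = (-1 : R) • ∑ l, ι R (u l) * ι R (v l) := by
    simp only [neg_one_smul, ← sum_neg_distrib, ← ι_mul_ι_anticomm]
  ext i j
  rw [Matrix.pow_succ_apply_of_apply_eq_mul hM, hsum, smul_pow, mul_smul_comm, smul_mul_assoc,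
    Matrix.diagonal_apply]
  split_ifs with hij
  · rw [hij, ι_mul_sum_pow_mul_ι_self u v hk, ← Nat.cast_smul_eq_nsmul R, smul_smul, mul_comm]
  · rw [ι_mul_sum_pow_mul_ι_of_ne u v hk hij, smul_zero]

end ExteriorAlgebra

/-- Let `M` be the `(n−1)×(n−1)` matrix of 2-forms `M i j = dz_i ∧ dz̄_j` (the entries of
`dS ∧ dS*`). For `n ≥ 2`, the matrix power `M^(n−1)`, computed over the exterior algebra,
equals `(n−2)! · (−1)^(n−2) · (dz_1 ∧ dz̄_1 ∧ ⋯ ∧ dz_{n−1} ∧ dz̄_{n−1}) · Id`. -/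
theorem stmt4 (n : ℕ) (hn : 2 ≤ n) {V : Type*} [AddCommGroup V] [Module ℂ V]
    (dz dzbar : Fin (n - 1) → V)
    (M : Matrix (Fin (n - 1)) (Fin (n - 1)) (ExteriorAlgebra ℂ V))
    (hM : ∀ i j, M i j = ExteriorAlgebra.ι ℂ (dz i) * ExteriorAlgebra.ι ℂ (dzbar j)) :
    M ^ (n - 1) =
      Matrix.diagonal (fun _ =>
        (((n - 2).factorial : ℂ) * (-1 : ℂ) ^ (n - 2)) •
          (List.ofFn fun i : Fin (n - 1) =>
            ExteriorAlgebra.ι ℂ (dz i) * ExteriorAlgebra.ι ℂ (dzbar i)).prod) := by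
  have hk : n - 1 = n - 2 + 1 := by omega
  rw [show M ^ (n - 1) = M ^ (n - 2 + 1) by rw [← hk],
    ExteriorAlgebra.pow_eq_diagonal_of_apply_eq_ι_mul_ι dz dzbar hM (by simpa using hk)]
  congr! 3
  exact noncommProd_univ_eq_prod_ofFn _ _
end

section
/- With φ(t,U) = (tanh(t)I + U)(I + tanh(t)U)⁻¹ as above, for every unitary U and every vector v: if (I + U)v = 0 then lim_{t→∞} φ(t,U)v = −v, and if v is orthogonal to Ker(I + U) then lim_{t→∞} φ(t,U)v = v. Dually, if (I − U)v = 0 then lim_{t→−∞} φ(t,U)v = v, and if v ⟂ Ker(I − U) then lim_{t→−∞} φ(t,U)v = −v. -/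
/-!
Write `s = tanh t ∈ (-1, 1)` and `φ_s = (s + U)(1 + sU)⁻¹`, the inverse existing because
`‖sU‖ < 1`. On `Ker(1 + U)` both factors are scalars and `φ_s = -1`. Since `1 + U` is normal,
`Ker(1 + U)ᗮ = Range(1 + U)`, and
`φ_s (1 + U) - (1 + U) = (s - 1)(1 - U)(1 + sU)⁻¹(1 + U)`
`                      = (s - 1)(1 - U)(1 + (1 - s)(1 + sU)⁻¹U)`
is `O(1 - s)` because `(1 - s)‖(1 + sU)⁻¹‖ ≤ 1`; hence `φ_s v → v` as `s → 1⁻`.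
The limits at `-∞` follow from `φ(s, U) = -φ(-s, -U)`.
-/

open Matrix Filter Topology

section Ring

variable {R : Type*} [Ring R] [Algebra ℝ R]

noncomputable def mobius (u : R) (s : ℝ) : R := (s • 1 + u) * Ring.inverse (1 + s • u)

theorem mobius_neg (u : R) (s : ℝ) : mobius u s = -mobius (-u) (-s) := by
  simp only [mobius, neg_smul, smul_neg, neg_neg, ← neg_add, neg_mul]

end Ring

section NormedRing

variable {R : Type*} [NormedRing R] [NormedAlgebra ℝ R] [CompleteSpace R] {u : R} {s : ℝ}

theorem isUnit_one_add_smul (hu : ‖u‖ ≤ 1) (hs : |s| < 1) : IsUnit (1 + s • u) := by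
  have h : ‖-(s • u)‖ < 1 := by
    rw [norm_neg, norm_smul, Real.norm_eq_abs]
    nlinarith [abs_nonneg s, norm_nonneg u]
  simpa using (Units.oneSub _ h).isUnit

theorem mobius_mul_one_add_smul (hu : ‖u‖ ≤ 1) (hs : |s| < 1) :
    mobius u s * (1 + s • u) = s • 1 + u := by
  rw [mobius, mul_assoc, Ring.inverse_mul_cancel _ (isUnit_one_add_smul hu hs), mul_one]

theorem one_sub_mul_norm_ringInverse_one_add_smul_le (hu : ‖u‖ ≤ 1) (hs₀ : 0 ≤ s)
    (hs₁ : s < 1) : (1 - s) * ‖Ring.inverse (1 + s • u)‖ ≤ ‖(1 : R)‖ := by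
  set a := Ring.inverse (1 + s • u)
  have ha : a + s • (u * a) = 1 := by
    have := Ring.mul_inverse_cancel _ (isUnit_one_add_smul hu (abs_lt.2 ⟨by linarith, hs₁⟩))
    rwa [add_mul, one_mul, smul_mul_assoc] at this
  have : ‖a‖ ≤ ‖(1 : R)‖ + s * ‖a‖ := calc
    ‖a‖ = ‖1 - s • (u * a)‖ := by rw [← ha, add_sub_cancel_right]
    _ ≤ ‖(1 : R)‖ + s * (‖u‖ * ‖a‖) := by
      grw [norm_sub_le, norm_smul, Real.norm_of_nonneg hs₀, norm_mul_le]
    _ ≤ ‖(1 : R)‖ + s * ‖a‖ := by gcongr; nlinarith [norm_nonneg a]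
  linarith

theorem mobius_mul_one_add_sub (hu : ‖u‖ ≤ 1) (hs : |s| < 1) :
    mobius u s * (1 + u) - (1 + u) =
      (s - 1) • ((1 - u) * (1 + (1 - s) • (Ring.inverse (1 + s • u) * u))) := by
  set a := Ring.inverse (1 + s • u)
  have hinv_mul : a * (1 + u) = 1 + (1 - s) • (a * u) := calc
    a * (1 + u) = a * (1 + s • u) + (1 - s) • (a * u) := by
      simp only [mul_add, mul_one, mul_smul_comm]; module
    _ = 1 + (1 - s) • (a * u) := by rw [Ring.inverse_mul_cancel _ (isUnit_one_add_smul hu hs)]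
  calc mobius u s * (1 + u) - (1 + u)
      = (1 + s • u) * a * (1 + u) + (s - 1) • ((1 - u) * (a * (1 + u))) - (1 + u) := by
        rw [mobius, mul_assoc, mul_assoc]
        simp only [add_mul, sub_mul, smul_mul_assoc, one_mul]
        module
    _ = _ := by rw [Ring.mul_inverse_cancel _ (isUnit_one_add_smul hu hs), one_mul, hinv_mul,
        add_sub_cancel_left]

theorem norm_mobius_mul_one_add_sub_le (hu : ‖u‖ ≤ 1) (hs₀ : 0 ≤ s) (hs₁ : s < 1) :
    ‖mobius u s * (1 + u) - (1 + u)‖ ≤ (1 - s) * (‖1 - u‖ * (‖(1 : R)‖ + ‖(1 : R)‖ * ‖u‖)) := by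
  rw [mobius_mul_one_add_sub hu (abs_lt.2 ⟨by linarith, hs₁⟩), norm_smul,
    Real.norm_of_nonpos (by linarith), neg_sub]
  gcongr
  calc ‖(1 - u) * (1 + (1 - s) • (Ring.inverse (1 + s • u) * u))‖
      ≤ ‖1 - u‖ * (‖(1 : R)‖ + (1 - s) * ‖Ring.inverse (1 + s • u)‖ * ‖u‖) := by
        grw [norm_mul_le, norm_add_le, norm_smul, Real.norm_of_nonneg (by linarith), norm_mul_le,
          mul_assoc]
        linarith
    _ ≤ ‖1 - u‖ * (‖(1 : R)‖ + ‖(1 : R)‖ * ‖u‖) := by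
        grw [one_sub_mul_norm_ringInverse_one_add_smul_le hu hs₀ hs₁]

theorem tendsto_mobius_mul_one_add (hu : ‖u‖ ≤ 1) :
    Tendsto (fun s => mobius u s * (1 + u)) (𝓝[<] 1) (𝓝 (1 + u)) := by
  rw [tendsto_iff_norm_sub_tendsto_zero]
  have hlim : Tendsto (fun s : ℝ => (1 - s) * (‖1 - u‖ * (‖(1 : R)‖ + ‖(1 : R)‖ * ‖u‖)))
      (𝓝[<] 1) (𝓝 0) := by
    rw [← zero_mul (‖1 - u‖ * _), ← sub_self (1 : ℝ)]
    exact ((tendsto_const_nhds.sub tendsto_id).mul_const _).mono_left nhdsWithin_le_nhds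
  refine squeeze_zero' (.of_forall fun _ => norm_nonneg _) ?_ hlim
  filter_upwards [Ioo_mem_nhdsLT (show (0 : ℝ) < 1 by norm_num)] with s hs
  exact norm_mobius_mul_one_add_sub_le hu hs.1.le hs.2

end NormedRing

theorem CStarRing.norm_le_one_of_mem_unitary {E : Type*} [NormedRing E] [StarRing E] [CStarRing E]
    {U : E} (hU : U ∈ unitary E) : ‖U‖ ≤ 1 := by
  rcases subsingleton_or_nontrivial E with _ | _
  · simp [Subsingleton.elim U 0]
  · exact (CStarRing.norm_of_mem_unitary hU).le

namespace Matrix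

section RCLike

variable {𝕜 m n : Type*} [RCLike 𝕜] [Fintype m] [DecidableEq m] [Fintype n] [DecidableEq n]

theorem exists_mulVec_eq_of_forall_conjTranspose_mulVec_eq_zero (A : Matrix m n 𝕜) {v : m → 𝕜}
    (hv : ∀ w, Aᴴ *ᵥ w = 0 → star v ⬝ᵥ w = 0) : ∃ x, A *ᵥ x = v := by
  have hmem : WithLp.toLp 2 v ∈ (toEuclideanLin Aᴴ).kerᗮ := by
    rw [Submodule.mem_orthogonal']
    intro w hw
    rw [EuclideanSpace.inner_eq_star_dotProduct, dotProduct_comm]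
    exact hv _ (congrArg WithLp.ofLp hw)
  rw [LinearMap.orthogonal_ker, ← toEuclideanLin_conjTranspose_eq_adjoint,
    conjTranspose_conjTranspose] at hmem
  obtain ⟨x, hx⟩ := hmem
  exact ⟨x.ofLp, congrArg WithLp.ofLp hx⟩

theorem exists_one_add_mulVec_eq_of_mem_unitaryGroup {U : Matrix n n 𝕜}
    (hU : U ∈ unitaryGroup n 𝕜) {v : n → 𝕜} (hv : ∀ w, (1 + U) *ᵥ w = 0 → star v ⬝ᵥ w = 0) :
    ∃ x, (1 + U) *ᵥ x = v := by
  have hfactor : 1 + U = U * (1 + U)ᴴ := by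
    rw [conjTranspose_add, conjTranspose_one, mul_add, mul_one, ← star_eq_conjTranspose,
      mem_unitaryGroup_iff.1 hU, add_comm]
  refine exists_mulVec_eq_of_forall_conjTranspose_mulVec_eq_zero _ fun w hw => hv w ?_
  rw [hfactor, ← mulVec_mulVec, hw, mulVec_zero]

end RCLike

section Unitary

open scoped Matrix.Norms.L2Operator

variable {n : Type*} [Fintype n] [DecidableEq n] {U : Matrix n n ℂ}

theorem mobius_mulVec_of_one_add_mulVec_eq_zero (hU : U ∈ unitaryGroup n ℂ) {v : n → ℂ}
    (hv : (1 + U) *ᵥ v = 0) {s : ℝ} (hs : |s| < 1) : mobius U s *ᵥ v = -v := by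
  have hUv : U *ᵥ v = -v := by
    rw [add_mulVec, one_mulVec] at hv
    exact eq_neg_of_add_eq_zero_right hv
  have key := congrArg (· *ᵥ v)
    (mobius_mul_one_add_smul (CStarRing.norm_le_one_of_mem_unitary hU) hs)
  simp only [← mulVec_mulVec, add_mulVec, one_mulVec, smul_mulVec, hUv] at key
  rw [show v + s • -v = (1 - s) • v by module, mulVec_smul] at key
  have hs1 : 1 - s ≠ 0 := by linarith [le_abs_self s]
  exact smul_right_injective _ hs1 (key.trans (by module))

theorem tendsto_mobius_mulVec (hU : U ∈ unitaryGroup n ℂ) {v : n → ℂ}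
    (hv : ∀ w, (1 + U) *ᵥ w = 0 → star v ⬝ᵥ w = 0) :
    Tendsto (fun s => mobius U s *ᵥ v) (𝓝[<] 1) (𝓝 v) := by
  obtain ⟨x, rfl⟩ := exists_one_add_mulVec_eq_of_mem_unitaryGroup hU hv
  simp only [mulVec_mulVec]
  exact ((continuous_id.matrix_mulVec continuous_const).tendsto _).comp
    (tendsto_mobius_mul_one_add (CStarRing.norm_le_one_of_mem_unitary hU))

end Unitary

end Matrix

namespace Real

theorem tanh_strictMono : StrictMono tanh := fun x y hxy => by
  by_contra! h
  have := artanh_le_artanh (neg_one_lt_tanh y) (tanh_lt_one x) h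
  rw [artanh_tanh, artanh_tanh] at this
  linarith

theorem tendsto_tanh_atTop : Tendsto tanh atTop (𝓝[<] 1) := by
  refine tendsto_nhdsWithin_iff.2 ⟨tendsto_atTop_isLUB tanh_strictMono.monotone ?_,
    .of_forall tanh_lt_one⟩
  rw [← Set.image_univ, tanh_bijOn.image_eq]
  exact isLUB_Ioo (by norm_num)

theorem tendsto_neg_tanh_atBot : Tendsto (fun t => -tanh t) atBot (𝓝[<] 1) := by
  simpa only [Function.comp_def, tanh_neg] using tendsto_tanh_atTop.comp tendsto_neg_atBot_atTop

end Real

/-- For `φ(t,U) = (tanh(t)I + U)(I + tanh(t)U)⁻¹` with `U` unitary and any vector `v`: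
if `(I + U)v = 0` then `φ(t,U)v → −v` as `t → ∞`; if `v ⟂ Ker(I + U)` then `φ(t,U)v → v`
as `t → ∞`. Dually, if `(I − U)v = 0` then `φ(t,U)v → v` as `t → −∞`, and if
`v ⟂ Ker(I − U)` then `φ(t,U)v → −v` as `t → −∞`. -/
theorem stmt9 (n : ℕ) (U : Matrix (Fin n) (Fin n) ℂ)
    (hU : U ∈ Matrix.unitaryGroup (Fin n) ℂ)
    (φ : ℝ → Matrix (Fin n) (Fin n) ℂ)
    (hφ : ∀ t, φ t = (Real.tanh t • (1 : Matrix (Fin n) (Fin n) ℂ) + U) *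
        (1 + Real.tanh t • U)⁻¹)
    (v : Fin n → ℂ) :
    (((1 : Matrix (Fin n) (Fin n) ℂ) + U).mulVec v = 0 →
      Tendsto (fun t => (φ t).mulVec v) atTop (nhds (-v))) ∧
    ((∀ w : Fin n → ℂ, ((1 : Matrix (Fin n) (Fin n) ℂ) + U).mulVec w = 0 →
        star v ⬝ᵥ w = 0) →
      Tendsto (fun t => (φ t).mulVec v) atTop (nhds v)) ∧
    (((1 : Matrix (Fin n) (Fin n) ℂ) - U).mulVec v = 0 →
      Tendsto (fun t => (φ t).mulVec v) atBot (nhds v)) ∧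
    ((∀ w : Fin n → ℂ, ((1 : Matrix (Fin n) (Fin n) ℂ) - U).mulVec w = 0 →
        star v ⬝ᵥ w = 0) →
      Tendsto (fun t => (φ t).mulVec v) atBot (nhds (-v))) := by
  have hφ_pos : ∀ t, φ t = mobius U (Real.tanh t) := fun t => by
    rw [hφ, mobius, nonsing_inv_eq_ringInverse]
  have hφ_neg : ∀ t, φ t = -mobius (-U) (-Real.tanh t) := fun t => by
    rw [hφ_pos, mobius_neg]
  have hU_neg : -U ∈ unitaryGroup (Fin n) ℂ := (-(⟨U, hU⟩ : unitaryGroup (Fin n) ℂ)).2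
  simp only [sub_eq_add_neg (1 : Matrix (Fin n) (Fin n) ℂ)]
  refine ⟨fun hv => ?_, fun hv => ?_, fun hv => ?_, fun hv => ?_⟩
  · refine tendsto_const_nhds.congr fun t => ?_
    rw [hφ_pos, mobius_mulVec_of_one_add_mulVec_eq_zero hU hv (Real.abs_tanh_lt_one t)]
  · simpa only [hφ_pos, Function.comp_def] using
      (tendsto_mobius_mulVec hU hv).comp Real.tendsto_tanh_atTop
  · refine tendsto_const_nhds.congr fun t => ?_
    rw [hφ_neg, neg_mulVec, mobius_mulVec_of_one_add_mulVec_eq_zero hU_neg hv (by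
      rw [abs_neg]; exact Real.abs_tanh_lt_one t), neg_neg]
  · simpa only [hφ_neg, neg_mulVec, Function.comp_def] using
      ((tendsto_mobius_mulVec hU_neg hv).comp Real.tendsto_neg_tanh_atBot).neg
end

section
/- Let A be an n×n self-adjoint complex matrix with eigenvalues λ_1 < ⋯ < λ_n, and define Φ(t,U₀) = (sinh(At) + cosh(At)U₀)(cosh(At) + sinh(At)U₀)⁻¹ for U₀ unitary. Then for all t for which cosh(At) + sinh(At)U₀ is invertible, Φ(t,U₀) is unitary, Φ(0,U₀) = U₀, and Φ satisfies ∂_t Φ = A − Φ A Φ, the gradient flow equation of f(U) = Re Tr(AU) on U(n). -/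
/-!
Write `c = cosh(tA)`, `s = sinh(tA)`, `N = s + cU₀` and `M = c + sU₀`, so that `Φ = NM⁻¹`.
Since `c` and `s` are commuting self-adjoint elements with `c² - s² = 1`, expanding gives
`N*N = M*M`, whence `Φ*Φ = (M⁻¹)* M*M M⁻¹ = 1`. Since `c' = As` and `s' = Ac`, the pair
`(N, M)` solves the linear system `N' = AM`, `M' = AN`, and the quotient rule turns this into
the Riccati equation `Φ' = A - ΦAΦ`.
-/

open NormedSpace
open scoped Ring

section StarRing

variable {R : Type*}

theorem star_mul_self_add_mul_swap [Ring R] [StarRing R] {c s u : R} (hc : IsSelfAdjoint c)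
    (hs : IsSelfAdjoint s) (hcs : Commute c s) (h : c * c - s * s = 1) (hu : star u * u = 1) :
    star (s + c * u) * (s + c * u) = star (c + s * u) * (c + s * u) := by
  simp only [star_add, star_mul, hc.star_eq, hs.star_eq]
  rw [← sub_eq_zero]
  calc (s + star u * c) * (s + c * u) - (c + star u * s) * (c + s * u)
      = -(c * c - s * s) + (s * c - c * s) * u + star u * (c * s - s * c)
        + star u * ((c * c - s * s) * u) := by noncomm_ring
    _ = 0 := by rw [hcs.eq, sub_self, h, one_mul, hu]; noncomm_ring

theorem star_mul_self_mul_ringInverse [MonoidWithZero R] [StarMul R] {N M : R} (hM : IsUnit M)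
    (h : star N * N = star M * M) : star (N * M⁻¹ʳ) * (N * M⁻¹ʳ) = 1 :=
  calc star (N * M⁻¹ʳ) * (N * M⁻¹ʳ) = star M⁻¹ʳ * (star N * N) * M⁻¹ʳ := by
        simp only [star_mul, mul_assoc]
    _ = star (M * M⁻¹ʳ) * (M * M⁻¹ʳ) := by rw [h]; simp only [star_mul, mul_assoc]
    _ = 1 := by rw [Ring.mul_inverse_cancel _ hM, star_one, one_mul]

end StarRing

section Riccati

variable {𝕜 R : Type*} [NontriviallyNormedField 𝕜] [NormedRing R] [NormedAlgebra 𝕜 R]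
  [HasSummableGeomSeries R] {t : 𝕜}

theorem HasDerivAt.ringInverse {M : 𝕜 → R} {M' : R} (hM : HasDerivAt M M' t)
    (ht : IsUnit (M t)) :
    HasDerivAt (fun s => (M s)⁻¹ʳ) (-((M t)⁻¹ʳ * M' * (M t)⁻¹ʳ)) t := by
  obtain ⟨u, hu⟩ := ht
  have hinv : HasFDerivAt Ring.inverse _ (M t) := hu ▸ hasFDerivAt_ringInverse (𝕜 := 𝕜) u
  have h := hinv.comp_hasDerivAt t hM
  simp only [neg_apply, ContinuousLinearMap.mulLeftRight_apply] at h
  rw [← hu, Ring.inverse_unit]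
  exact h

theorem HasDerivAt.mul_ringInverse_of_riccati {N M : 𝕜 → R} {a : R}
    (hN : HasDerivAt N (a * M t) t) (hM : HasDerivAt M (a * N t) t) (ht : IsUnit (M t)) :
    HasDerivAt (fun s => N s * (M s)⁻¹ʳ) (a - N t * (M t)⁻¹ʳ * a * (N t * (M t)⁻¹ʳ)) t := by
  refine (hN.mul (hM.ringInverse ht)).congr_deriv ?_
  rw [mul_assoc a, Ring.mul_inverse_cancel _ ht]
  noncomm_ring

end Riccati

namespace NormedSpace

section TopologicalAlgebra

variable {𝔸 : Type*} [Ring 𝔸] [Algebra ℂ 𝔸] [TopologicalSpace 𝔸] [IsTopologicalRing 𝔸]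

noncomputable def cosh (a : 𝔸) : 𝔸 := ((1 : ℂ) / 2) • (exp a + exp (-a))

noncomputable def sinh (a : 𝔸) : 𝔸 := ((1 : ℂ) / 2) • (exp a - exp (-a))

theorem cosh_zero : cosh (0 : 𝔸) = 1 := by
  rw [cosh, neg_zero, exp_zero, ← two_smul ℂ, smul_smul]
  norm_num

theorem sinh_zero : sinh (0 : 𝔸) = 0 := by
  rw [sinh, neg_zero, sub_self, smul_zero]

variable [T2Space 𝔸]

theorem commute_cosh_sinh (a : 𝔸) : Commute (cosh a) (sinh a) := by
  have h : Commute (exp a) (exp (-a)) := (Commute.refl a).neg_right.exp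
  exact (((Commute.refl _).sub_right h).add_left (h.symm.sub_right (Commute.refl _))).smul_left
    _ |>.smul_right _

variable [StarRing 𝔸] [StarModule ℂ 𝔸] [ContinuousStar 𝔸] {a : 𝔸}

theorem _root_.IsSelfAdjoint.cosh (ha : IsSelfAdjoint a) : IsSelfAdjoint (cosh a) :=
  IsSelfAdjoint.smul (by simp [IsSelfAdjoint] : IsSelfAdjoint ((1 : ℂ) / 2))
    (ha.exp.add ha.neg.exp)

theorem _root_.IsSelfAdjoint.sinh (ha : IsSelfAdjoint a) : IsSelfAdjoint (sinh a) :=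
  IsSelfAdjoint.smul (by simp [IsSelfAdjoint] : IsSelfAdjoint ((1 : ℂ) / 2))
    (ha.exp.sub ha.neg.exp)

end TopologicalAlgebra

section BanachAlgebra

variable {𝔸 : Type*} [NormedRing 𝔸] [NormedAlgebra ℂ 𝔸] [CompleteSpace 𝔸]

theorem exp_mul_exp_neg (a : 𝔸) : exp a * exp (-a) = 1 := by
  have hball : ∀ x : 𝔸, x ∈ Metric.eball (0 : 𝔸) (expSeries ℂ 𝔸).radius := fun _ =>
    (expSeries_radius_eq_top ℂ 𝔸).symm ▸ edist_lt_top _ _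
  rw [← exp_add_of_commute_of_mem_ball (Commute.refl a).neg_right (hball _) (hball _),
    add_neg_cancel, exp_zero]

theorem cosh_mul_self_sub_sinh_mul_self (a : 𝔸) : cosh a * cosh a - sinh a * sinh a = 1 := by
  have hfe : exp (-a) * exp a = 1 := by simpa using exp_mul_exp_neg (-a)
  have h : ∀ e f : 𝔸,
      (e + f) * (e + f) - (e - f) * (e - f) = (2 : ℂ) • (e * f) + (2 : ℂ) • (f * e) := by
    intros; simp only [two_smul]; noncomm_ring
  rw [cosh, sinh, smul_mul_smul_comm, smul_mul_smul_comm, ← smul_sub, h, exp_mul_exp_neg, hfe,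
    ← add_smul, smul_smul]
  norm_num

theorem hasDerivAt_exp_ofReal_smul (a : 𝔸) (t : ℝ) :
    HasDerivAt (fun s : ℝ => exp ((s : ℂ) • a)) (a * exp ((t : ℂ) • a)) t := by
  simpa only [Complex.coe_smul] using hasDerivAt_exp_smul_const' (𝕂 := ℝ) a t

theorem hasDerivAt_exp_neg_ofReal_smul (a : 𝔸) (t : ℝ) :
    HasDerivAt (fun s : ℝ => exp (-((s : ℂ) • a))) (-(a * exp (-((t : ℂ) • a)))) t := by
  simpa only [smul_neg, neg_mul] using hasDerivAt_exp_ofReal_smul (-a) t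

theorem hasDerivAt_cosh_ofReal_smul (a : 𝔸) (t : ℝ) :
    HasDerivAt (fun s : ℝ => cosh ((s : ℂ) • a)) (a * sinh ((t : ℂ) • a)) t := by
  have h := ((hasDerivAt_exp_ofReal_smul a t).add
    (hasDerivAt_exp_neg_ofReal_smul a t)).const_smul ((1 : ℂ) / 2)
  rwa [sinh, mul_smul_comm, mul_sub, sub_eq_add_neg]

theorem hasDerivAt_sinh_ofReal_smul (a : 𝔸) (t : ℝ) :
    HasDerivAt (fun s : ℝ => sinh ((s : ℂ) • a)) (a * cosh ((t : ℂ) • a)) t := by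
  have h := ((hasDerivAt_exp_ofReal_smul a t).sub
    (hasDerivAt_exp_neg_ofReal_smul a t)).const_smul ((1 : ℂ) / 2)
  rwa [cosh, mul_smul_comm, mul_add, ← sub_neg_eq_add]

theorem hasDerivAt_sinh_add_cosh_mul (a u : 𝔸) (t : ℝ) :
    HasDerivAt (fun s : ℝ => sinh ((s : ℂ) • a) + cosh ((s : ℂ) • a) * u)
      (a * (cosh ((t : ℂ) • a) + sinh ((t : ℂ) • a) * u)) t := by
  rw [mul_add, ← mul_assoc]
  exact (hasDerivAt_sinh_ofReal_smul a t).fun_add ((hasDerivAt_cosh_ofReal_smul a t).mul_const u)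

theorem hasDerivAt_cosh_add_sinh_mul (a u : 𝔸) (t : ℝ) :
    HasDerivAt (fun s : ℝ => cosh ((s : ℂ) • a) + sinh ((s : ℂ) • a) * u)
      (a * (sinh ((t : ℂ) • a) + cosh ((t : ℂ) • a) * u)) t := by
  rw [mul_add, ← mul_assoc]
  exact (hasDerivAt_cosh_ofReal_smul a t).fun_add ((hasDerivAt_sinh_ofReal_smul a t).mul_const u)

end BanachAlgebra

end NormedSpace

section HyperbolicFlow

variable {𝔸 : Type*}

noncomputable def hyperbolicFlow [Ring 𝔸] [Algebra ℂ 𝔸] [TopologicalSpace 𝔸]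
    [IsTopologicalRing 𝔸] (a u : 𝔸) (t : ℝ) : 𝔸 :=
  (sinh ((t : ℂ) • a) + cosh ((t : ℂ) • a) * u) *
    (cosh ((t : ℂ) • a) + sinh ((t : ℂ) • a) * u)⁻¹ʳ

theorem hyperbolicFlow_zero [Ring 𝔸] [Algebra ℂ 𝔸] [TopologicalSpace 𝔸] [IsTopologicalRing 𝔸]
    (a u : 𝔸) : hyperbolicFlow a u 0 = u := by
  simp [hyperbolicFlow, cosh_zero, sinh_zero]

variable [NormedRing 𝔸] [NormedAlgebra ℂ 𝔸] [CompleteSpace 𝔸]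

theorem star_hyperbolicFlow_mul_self [StarRing 𝔸] [StarModule ℂ 𝔸] [ContinuousStar 𝔸] {a u : 𝔸}
    {t : ℝ} (ha : IsSelfAdjoint a) (hu : star u * u = 1)
    (ht : IsUnit (cosh ((t : ℂ) • a) + sinh ((t : ℂ) • a) * u)) :
    star (hyperbolicFlow a u t) * hyperbolicFlow a u t = 1 := by
  have hta : IsSelfAdjoint ((t : ℂ) • a) := IsSelfAdjoint.smul (by simp [IsSelfAdjoint]) ha
  exact star_mul_self_mul_ringInverse ht <| star_mul_self_add_mul_swap hta.cosh hta.sinh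
    (commute_cosh_sinh _) (cosh_mul_self_sub_sinh_mul_self _) hu

theorem hasDerivAt_hyperbolicFlow (a u : 𝔸) {t : ℝ}
    (ht : IsUnit (cosh ((t : ℂ) • a) + sinh ((t : ℂ) • a) * u)) :
    HasDerivAt (hyperbolicFlow a u) (a - hyperbolicFlow a u t * a * hyperbolicFlow a u t) t :=
  -- `M` is given explicitly: unification cannot recover it from the value `M t`.
  (hasDerivAt_sinh_add_cosh_mul a u t).mul_ringInverse_of_riccati
    (M := fun s : ℝ => cosh ((s : ℂ) • a) + sinh ((s : ℂ) • a) * u)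
    (hasDerivAt_cosh_add_sinh_mul a u t) ht

end HyperbolicFlow

open Matrix

theorem stmt10_general (n : ℕ) (A : Matrix (Fin n) (Fin n) ℂ) (hA : A.IsHermitian)
    (U₀ : Matrix (Fin n) (Fin n) ℂ) (hU₀ : U₀ ∈ Matrix.unitaryGroup (Fin n) ℂ)
    (C S Φ : ℝ → Matrix (Fin n) (Fin n) ℂ)
    (hC : ∀ t, C t = ((1 : ℂ) / 2) •
        (NormedSpace.exp ((t : ℂ) • A) + NormedSpace.exp (-((t : ℂ) • A))))
    (hS : ∀ t, S t = ((1 : ℂ) / 2) •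
        (NormedSpace.exp ((t : ℂ) • A) - NormedSpace.exp (-((t : ℂ) • A))))
    (hΦ : ∀ t, Φ t = (S t + C t * U₀) * (C t + S t * U₀)⁻¹) :
    (∀ t : ℝ, IsUnit (C t + S t * U₀) → Φ t ∈ Matrix.unitaryGroup (Fin n) ℂ) ∧
    Φ 0 = U₀ ∧
    (∀ t : ℝ, IsUnit (C t + S t * U₀) →
      ∀ i j : Fin n, HasDerivAt (fun s => Φ s i j) ((A - Φ t * A * Φ t) i j) t) := by
  -- The L2 operator norm makes matrices a C⋆-algebra whose topology is definitionally the
  -- entrywise one, so derivatives in it can be read off entry by entry with `hasDerivAt_pi`.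
  let _ : CStarAlgebra (Matrix (Fin n) (Fin n) ℂ) := Matrix.instCStarAlgebra
  obtain rfl : C = fun t : ℝ => cosh ((t : ℂ) • A) := funext hC
  obtain rfl : S = fun t : ℝ => sinh ((t : ℂ) • A) := funext hS
  obtain rfl : Φ = hyperbolicFlow A U₀ := by
    funext t
    rw [hΦ, nonsing_inv_eq_ringInverse, hyperbolicFlow]
  refine ⟨fun t ht => ?_, hyperbolicFlow_zero A U₀, fun t ht i j => ?_⟩
  · exact mem_unitaryGroup_iff'.mpr <|
      star_hyperbolicFlow_mul_self hA (mem_unitaryGroup_iff'.mp hU₀) ht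
  · exact hasDerivAt_pi.1 (hasDerivAt_pi.1 (hasDerivAt_hyperbolicFlow A U₀ ht) i) j

/-- Let `A` be an `n×n` self-adjoint matrix with eigenvalues `λ_1 < ⋯ < λ_n`, and define
`Φ(t,U₀) = (sinh(At) + cosh(At)U₀)(cosh(At) + sinh(At)U₀)⁻¹` for `U₀` unitary. Then for all
`t` for which `cosh(At) + sinh(At)U₀` is invertible, `Φ(t,U₀)` is unitary; `Φ(0,U₀) = U₀`;
and `Φ` satisfies `∂_t Φ = A − Φ A Φ`, the gradient flow equation of `f(U) = Re Tr(AU)`. -/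
theorem stmt10 (n : ℕ) (A : Matrix (Fin n) (Fin n) ℂ) (hA : A.IsHermitian)
    (lam : Fin n → ℝ) (hlam : StrictMono lam)
    (hspec : spectrum ℂ A = Set.range fun i => (lam i : ℂ))
    (U₀ : Matrix (Fin n) (Fin n) ℂ) (hU₀ : U₀ ∈ Matrix.unitaryGroup (Fin n) ℂ)
    (C S Φ : ℝ → Matrix (Fin n) (Fin n) ℂ)
    (hC : ∀ t, C t = ((1 : ℂ) / 2) •
        (NormedSpace.exp ((t : ℂ) • A) + NormedSpace.exp (-((t : ℂ) • A))))
    (hS : ∀ t, S t = ((1 : ℂ) / 2) •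
        (NormedSpace.exp ((t : ℂ) • A) - NormedSpace.exp (-((t : ℂ) • A))))
    (hΦ : ∀ t, Φ t = (S t + C t * U₀) * (C t + S t * U₀)⁻¹) :
    (∀ t : ℝ, IsUnit (C t + S t * U₀) → Φ t ∈ Matrix.unitaryGroup (Fin n) ℂ) ∧
    Φ 0 = U₀ ∧
    (∀ t : ℝ, IsUnit (C t + S t * U₀) →
      ∀ i j : Fin n, HasDerivAt (fun s => Φ s i j) ((A - Φ t * A * Φ t) i j) t) :=
  stmt10_general n A hA U₀ hU₀ C S Φ hC hS hΦ
end
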